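/- arXiv:math/0507187 — 2 statements merged into one kernel-verified Lean document; each statement's English description precedes it below -/
import Mathlib

section
/- Let ω : ℝ² → ℝ satisfy sinh(ω(x,y)) = −tan(αx + βy) on the strip {(x,y) : |αx+βy| < π/2}, where α, β ∈ ℝ are constants with α² + β² = 1. Then ω satisfies the sinh-Gordon equation Δ₀ω − sinh(ω)cosh(ω) = 0 and the separation equation ω_{xy} − tanh(ω)·ω_x·ω_y = 0 on that strip. -/
open Real Filter

/-- Partial derivative in the first variable of a function of two real variables. -/
noncomputable def pdx (w : ℝ → ℝ → ℝ) : ℝ → ℝ → ℝ :=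
  fun x y => deriv (fun s => w s y) x

/-- Partial derivative in the second variable of a function of two real variables. -/
noncomputable def pdy (w : ℝ → ℝ → ℝ) : ℝ → ℝ → ℝ :=
  fun x y => deriv (fun t => w x t) y

noncomputable def gfun : ℝ → ℝ := fun u => Real.arsinh (-Real.tan u)

noncomputable def hfun : ℝ → ℝ := fun u => -(Real.cos u)⁻¹

lemma cos_pos' {u : ℝ} (hu : |u| < Real.pi / 2) : 0 < Real.cos u :=
  Real.cos_pos_of_mem_Ioo ⟨(abs_lt.mp hu).1, (abs_lt.mp hu).2⟩

lemma one_add_tan_sq' {u : ℝ} (hc : Real.cos u ≠ 0) :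
    1 + Real.tan u ^ 2 = ((Real.cos u)⁻¹) ^ 2 := by
  rw [Real.tan_eq_sin_div_cos]
  field_simp
  try rw [add_comm]
  try exact Real.sin_sq_add_cos_sq u
  try nlinarith [Real.sin_sq_add_cos_sq u]

lemma hasDerivAt_gfun {u : ℝ} (hu : |u| < Real.pi / 2) :
    HasDerivAt gfun (hfun u) u := by
  have hc : 0 < Real.cos u := cos_pos' hu
  have ht : HasDerivAt (fun v => -Real.tan v) (-(1 / Real.cos u ^ 2)) u :=
    (Real.hasDerivAt_tan hc.ne').neg
  have ha := (Real.hasDerivAt_arsinh (-Real.tan u)).comp u ht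
  refine ha.congr_deriv ?_
  symm
  have h1 : 1 + (-Real.tan u) ^ 2 = ((Real.cos u)⁻¹) ^ 2 := by
    rw [neg_pow]; simpa using one_add_tan_sq' hc.ne'
  rw [h1, Real.sqrt_sq (by positivity)]
  field_simp [hfun]
  simp [hfun, hc.ne']

lemma hasDerivAt_hfun {u : ℝ} (hu : |u| < Real.pi / 2) :
    HasDerivAt hfun (-(Real.sin u / Real.cos u ^ 2)) u := by
  have hc : 0 < Real.cos u := cos_pos' hu
  have := ((Real.hasDerivAt_cos u).inv hc.ne').neg
  refine this.congr_deriv ?_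
  field_simp

theorem degenerate_solution (α β : ℝ) (hαβ : α ^ 2 + β ^ 2 = 1)
    (ω : ℝ → ℝ → ℝ)
    (hω : ∀ x y, |α * x + β * y| < Real.pi / 2 →
      Real.sinh (ω x y) = -Real.tan (α * x + β * y)) :
    ∀ x y, |α * x + β * y| < Real.pi / 2 →
      (pdx (pdx ω) x y + pdy (pdy ω) x y
        - Real.sinh (ω x y) * Real.cosh (ω x y) = 0) ∧
      (pdy (pdx ω) x y - Real.tanh (ω x y) * pdx ω x y * pdy ω x y = 0) := by
  -- ω agrees with gfun on the strip
  have hkey : ∀ x y, |α * x + β * y| < Real.pi / 2 → ω x y = gfun (α * x + β * y) := by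
    intro x y h
    apply Real.sinh_injective
    rw [hω x y h, gfun, Real.sinh_arsinh]
  -- openness of sections
  have hopenx : ∀ y : ℝ, IsOpen {s : ℝ | |α * s + β * y| < Real.pi / 2} := by
    intro y
    exact isOpen_lt (by fun_prop) continuous_const
  have hopeny : ∀ x : ℝ, IsOpen {t : ℝ | |α * x + β * t| < Real.pi / 2} := by
    intro x
    exact isOpen_lt (by fun_prop) continuous_const
  -- first partials
  have hpdx : ∀ x y, |α * x + β * y| < Real.pi / 2 →
      pdx ω x y = α * hfun (α * x + β * y) := by
    intro x y h
    have hev : (fun s => ω s y) =ᶠ[nhds x] (fun s => gfun (α * s + β * y)) :=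
      eventually_of_mem ((hopenx y).mem_nhds h) (fun s hs => hkey s y hs)
    have hinner : HasDerivAt (fun s : ℝ => α * s + β * y) α x := by
      simpa using ((hasDerivAt_id x).const_mul α).add_const (β * y)
    have hd : HasDerivAt (fun s => gfun (α * s + β * y))
        (α * hfun (α * x + β * y)) x := by
      have := (hasDerivAt_gfun h).comp x hinner
      simpa [mul_comm, Function.comp_def] using this
    rw [pdx, hev.deriv_eq, hd.deriv]
  have hpdy : ∀ x y, |α * x + β * y| < Real.pi / 2 →
      pdy ω x y = β * hfun (α * x + β * y) := by
    intro x y h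
    have hev : (fun t => ω x t) =ᶠ[nhds y] (fun t => gfun (α * x + β * t)) :=
      eventually_of_mem ((hopeny x).mem_nhds h) (fun t ht => hkey x t ht)
    have hinner : HasDerivAt (fun t : ℝ => α * x + β * t) β y := by
      simpa using (((hasDerivAt_id y).const_mul β).const_add (α * x))
    have hd : HasDerivAt (fun t => gfun (α * x + β * t))
        (β * hfun (α * x + β * y)) y := by
      have := (hasDerivAt_gfun h).comp y hinner
      simpa [mul_comm, Function.comp_def] using this
    rw [pdy, hev.deriv_eq, hd.deriv]
  intro x y h
  set u := α * x + β * y with hu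
  have hc : 0 < Real.cos u := cos_pos' h
  -- second partials
  have hxx : pdx (pdx ω) x y = α ^ 2 * (-(Real.sin u / Real.cos u ^ 2)) := by
    have hev : (fun s => pdx ω s y) =ᶠ[nhds x]
        (fun s => α * hfun (α * s + β * y)) :=
      eventually_of_mem ((hopenx y).mem_nhds h) (fun s hs => hpdx s y hs)
    have hinner : HasDerivAt (fun s : ℝ => α * s + β * y) α x := by
      simpa using ((hasDerivAt_id x).const_mul α).add_const (β * y)
    have hd : HasDerivAt (fun s => α * hfun (α * s + β * y))
        (α ^ 2 * (-(Real.sin u / Real.cos u ^ 2))) x := by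
      have := (((hasDerivAt_hfun h).comp x hinner).const_mul α)
      refine this.congr_deriv ?_; ring
    rw [pdx, hev.deriv_eq, hd.deriv]
  have hyy : pdy (pdy ω) x y = β ^ 2 * (-(Real.sin u / Real.cos u ^ 2)) := by
    have hev : (fun t => pdy ω x t) =ᶠ[nhds y]
        (fun t => β * hfun (α * x + β * t)) :=
      eventually_of_mem ((hopeny x).mem_nhds h) (fun t ht => hpdy x t ht)
    have hinner : HasDerivAt (fun t : ℝ => α * x + β * t) β y := by
      simpa using (((hasDerivAt_id y).const_mul β).const_add (α * x))
    have hd : HasDerivAt (fun t => β * hfun (α * x + β * t))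
        (β ^ 2 * (-(Real.sin u / Real.cos u ^ 2))) y := by
      have := (((hasDerivAt_hfun h).comp y hinner).const_mul β)
      refine this.congr_deriv ?_; ring
    rw [pdy, hev.deriv_eq, hd.deriv]
  have hxy : pdy (pdx ω) x y = α * β * (-(Real.sin u / Real.cos u ^ 2)) := by
    have hev : (fun t => pdx ω x t) =ᶠ[nhds y]
        (fun t => α * hfun (α * x + β * t)) :=
      eventually_of_mem ((hopeny x).mem_nhds h) (fun t ht => hpdx x t ht)
    have hinner : HasDerivAt (fun t : ℝ => α * x + β * t) β y := by
      simpa using (((hasDerivAt_id y).const_mul β).const_add (α * x))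
    have hd : HasDerivAt (fun t => α * hfun (α * x + β * t))
        (α * β * (-(Real.sin u / Real.cos u ^ 2))) y := by
      have := (((hasDerivAt_hfun h).comp y hinner).const_mul α)
      refine this.congr_deriv ?_; ring
    rw [pdy, hev.deriv_eq, hd.deriv]
  -- values of sinh, cosh, tanh
  have hsinh : Real.sinh (ω x y) = -Real.tan u := hω x y h
  have hcosh : Real.cosh (ω x y) = (Real.cos u)⁻¹ := by
    have h1 : Real.cosh (ω x y) ^ 2 = ((Real.cos u)⁻¹) ^ 2 := by
      rw [Real.cosh_sq', hsinh, neg_pow]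
      simpa [add_comm] using one_add_tan_sq' hc.ne'
    have h2 := Real.cosh_pos (ω x y)
    nlinarith [inv_pos.mpr hc]
  have htanh : Real.tanh (ω x y) = -Real.sin u := by
    rw [Real.tanh_eq_sinh_div_cosh, hsinh, hcosh, Real.tan_eq_sin_div_cos]
    field_simp
  constructor
  · rw [hxx, hyy, hsinh, hcosh, Real.tan_eq_sin_div_cos]
    field_simp
    linear_combination (-Real.sin u) * hαβ
  · rw [hxy, htanh, hpdx x y h, hpdy x y h]
    show α * β * (-(Real.sin u / Real.cos u ^ 2)) -
      -Real.sin u * (α * hfun u) * (β * hfun u) = 0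
    rw [hfun]
    field_simp
    ring
end

section
/- Let ω : ℝ² → ℝ be smooth satisfying Δ₀ω + c₀·sinh(ω)·cosh(ω) = 0 and ω_{xy} − tanh(ω)·ω_x·ω_y = 0, and set f = −ω_x/cosh(ω), g = −ω_y/cosh(ω). Then f_x + g_y = (c₀ + f² + g²)·sinh(ω). -/
lemma hasDerivAt_pdx (w : ℝ → ℝ → ℝ) (h : ContDiff ℝ (⊤ : ℕ∞) fun p : ℝ × ℝ => w p.1 p.2)
    (x y : ℝ) : HasDerivAt (fun s => w s y) (pdx w x y) x := by
  have hF : Differentiable ℝ (fun p : ℝ × ℝ => w p.1 p.2) := h.differentiable (by simp)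
  have hin : HasDerivAt (fun s : ℝ => (s, y)) ((1 : ℝ), (0 : ℝ)) x :=
    HasDerivAt.prodMk (hasDerivAt_id x) (hasDerivAt_const x y)
  have h2 : HasDerivAt (fun s => w s y)
      (fderiv ℝ (fun p : ℝ × ℝ => w p.1 p.2) (x, y) ((1 : ℝ), (0 : ℝ))) x :=
    by have := (hF (x, y)).hasFDerivAt.comp_hasDerivAt x hin; exact this
  show HasDerivAt (fun s => w s y) (deriv (fun s => w s y) x) x
  rw [h2.deriv]; exact h2

lemma hasDerivAt_pdy (w : ℝ → ℝ → ℝ) (h : ContDiff ℝ (⊤ : ℕ∞) fun p : ℝ × ℝ => w p.1 p.2)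
    (x y : ℝ) : HasDerivAt (fun t => w x t) (pdy w x y) y := by
  have hF : Differentiable ℝ (fun p : ℝ × ℝ => w p.1 p.2) := h.differentiable (by simp)
  have hin : HasDerivAt (fun t : ℝ => (x, t)) ((0 : ℝ), (1 : ℝ)) y :=
    HasDerivAt.prodMk (hasDerivAt_const y x) (hasDerivAt_id y)
  have h2 : HasDerivAt (fun t => w x t)
      (fderiv ℝ (fun p : ℝ × ℝ => w p.1 p.2) (x, y) ((0 : ℝ), (1 : ℝ))) y :=
    (hF (x, y)).hasFDerivAt.comp_hasDerivAt y hin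
  show HasDerivAt (fun t => w x t) (deriv (fun t => w x t) y) y
  rw [h2.deriv]; exact h2

lemma contDiff_pdx (w : ℝ → ℝ → ℝ) (h : ContDiff ℝ (⊤ : ℕ∞) fun p : ℝ × ℝ => w p.1 p.2) :
    ContDiff ℝ (⊤ : ℕ∞) fun p : ℝ × ℝ => pdx w p.1 p.2 := by
  have key : (fun p : ℝ × ℝ => pdx w p.1 p.2)
      = fun p : ℝ × ℝ => fderiv ℝ (fun p : ℝ × ℝ => w p.1 p.2) p ((1 : ℝ), (0 : ℝ)) := by
    funext ⟨x, y⟩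
    have hF : Differentiable ℝ (fun p : ℝ × ℝ => w p.1 p.2) := h.differentiable (by simp)
    have hin : HasDerivAt (fun s : ℝ => (s, y)) ((1 : ℝ), (0 : ℝ)) x :=
      HasDerivAt.prodMk (hasDerivAt_id x) (hasDerivAt_const x y)
    have h2 : HasDerivAt (fun s => w s y)
        (fderiv ℝ (fun p : ℝ × ℝ => w p.1 p.2) (x, y) ((1 : ℝ), (0 : ℝ))) x :=
      by have := (hF (x, y)).hasFDerivAt.comp_hasDerivAt x hin; exact this
    exact h2.deriv
  rw [key]
  exact (h.fderiv_right (by simp)).clm_apply contDiff_const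

lemma contDiff_pdy (w : ℝ → ℝ → ℝ) (h : ContDiff ℝ (⊤ : ℕ∞) fun p : ℝ × ℝ => w p.1 p.2) :
    ContDiff ℝ (⊤ : ℕ∞) fun p : ℝ × ℝ => pdy w p.1 p.2 := by
  have key : (fun p : ℝ × ℝ => pdy w p.1 p.2)
      = fun p : ℝ × ℝ => fderiv ℝ (fun p : ℝ × ℝ => w p.1 p.2) p ((0 : ℝ), (1 : ℝ)) := by
    funext ⟨x, y⟩
    have hF : Differentiable ℝ (fun p : ℝ × ℝ => w p.1 p.2) := h.differentiable (by simp)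
    have hin : HasDerivAt (fun t : ℝ => (x, t)) ((0 : ℝ), (1 : ℝ)) y :=
      HasDerivAt.prodMk (hasDerivAt_const y x) (hasDerivAt_id y)
    have h2 : HasDerivAt (fun t => w x t)
        (fderiv ℝ (fun p : ℝ × ℝ => w p.1 p.2) (x, y) ((0 : ℝ), (1 : ℝ))) y :=
      (hF (x, y)).hasFDerivAt.comp_hasDerivAt y hin
    exact h2.deriv
  rw [key]
  exact (h.fderiv_right (by simp)).clm_apply contDiff_const

set_option linter.unusedVariables false in
theorem key_identity_3_3 (c₀ : ℝ) (ω : ℝ → ℝ → ℝ)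
    (hsmooth : ContDiff ℝ (⊤ : ℕ∞) (fun p : ℝ × ℝ => ω p.1 p.2))
    (hgauss : ∀ x y, pdx (pdx ω) x y + pdy (pdy ω) x y
      + c₀ * Real.sinh (ω x y) * Real.cosh (ω x y) = 0)
    (hsep : ∀ x y, pdy (pdx ω) x y
      - Real.tanh (ω x y) * pdx ω x y * pdy ω x y = 0)
    (f g : ℝ → ℝ → ℝ)
    (hf : f = fun x y => -(pdx ω x y) / Real.cosh (ω x y))
    (hg : g = fun x y => -(pdy ω x y) / Real.cosh (ω x y)) :
    ∀ x y, pdx f x y + pdy g x y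
      = (c₀ + (f x y) ^ 2 + (g x y) ^ 2) * Real.sinh (ω x y) := by
  intro x y
  have hpx := contDiff_pdx ω hsmooth
  have hpy := contDiff_pdy ω hsmooth
  have hc0 : Real.cosh (ω x y) ≠ 0 := (Real.cosh_pos (ω x y)).ne'
  have hωx : HasDerivAt (fun t => ω t y) (pdx ω x y) x := hasDerivAt_pdx ω hsmooth x y
  have hωy : HasDerivAt (fun t => ω x t) (pdy ω x y) y := hasDerivAt_pdy ω hsmooth x y
  have haxx : HasDerivAt (fun t => pdx ω t y) (pdx (pdx ω) x y) x :=
    hasDerivAt_pdx (pdx ω) hpx x y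
  have hbyy : HasDerivAt (fun t => pdy ω x t) (pdy (pdy ω) x y) y :=
    hasDerivAt_pdy (pdy ω) hpy x y
  have hcoshx : HasDerivAt (fun t => Real.cosh (ω t y)) (Real.sinh (ω x y) * pdx ω x y) x :=
    by have := (Real.hasDerivAt_cosh (ω x y)).comp x hωx; exact this
  have hcoshy : HasDerivAt (fun t => Real.cosh (ω x t)) (Real.sinh (ω x y) * pdy ω x y) y :=
    (Real.hasDerivAt_cosh (ω x y)).comp y hωy
  have hfx : HasDerivAt (fun t => -(pdx ω t y) / Real.cosh (ω t y))
      ((-(pdx (pdx ω) x y) * Real.cosh (ω x y)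
        - (-(pdx ω x y)) * (Real.sinh (ω x y) * pdx ω x y)) / Real.cosh (ω x y) ^ 2) x :=
    haxx.neg.div hcoshx hc0
  have hgy : HasDerivAt (fun t => -(pdy ω x t) / Real.cosh (ω x t))
      ((-(pdy (pdy ω) x y) * Real.cosh (ω x y)
        - (-(pdy ω x y)) * (Real.sinh (ω x y) * pdy ω x y)) / Real.cosh (ω x y) ^ 2) y :=
    hbyy.neg.div hcoshy hc0
  have e1 : pdx f x y = (-(pdx (pdx ω) x y) * Real.cosh (ω x y)
      - (-(pdx ω x y)) * (Real.sinh (ω x y) * pdx ω x y)) / Real.cosh (ω x y) ^ 2 := by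
    rw [hf]; exact hfx.deriv
  have e2 : pdy g x y = (-(pdy (pdy ω) x y) * Real.cosh (ω x y)
      - (-(pdy ω x y)) * (Real.sinh (ω x y) * pdy ω x y)) / Real.cosh (ω x y) ^ 2 := by
    rw [hg]; exact hgy.deriv
  have hA : pdx (pdx ω) x y + pdy (pdy ω) x y
      = -(c₀ * Real.sinh (ω x y) * Real.cosh (ω x y)) := by
    have := hgauss x y; linarith
  rw [e1, e2, hf, hg]
  simp only
  field_simp
  linear_combination (-Real.cosh (ω x y)) * hA
end
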